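/- arXiv:2603.24305 — 3 statements merged into one kernel-verified Lean document; each statement's English description precedes it below -/
import Mathlib

section
/- Let G be a connected chordal graph containing no strict comb of cliques, let K be a clique in G, and let C be a connected component of G − K with S = N(C). Then C contains a vertex v adjacent to every vertex of S. -/
open SimpleGraph

variable {V W : Type*}

/-- `G` contains no induced cycle of length at least four. -/
def IsChordal (G : SimpleGraph V) : Prop :=
  ∀ (n : ℕ), 4 ≤ n → ∀ f : ZMod n → V, Function.Injective f →
    (∀ i j : ZMod n, G.Adj (f i) (f j) ↔ j = i + 1 ∨ i = j + 1) → False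

/-- The set of vertices outside `C` having a neighbour in `C`. -/
def nbhdSet (G : SimpleGraph V) (C : Set V) : Set V :=
  {v | v ∉ C ∧ ∃ u ∈ C, G.Adj u v}

/-- `C` is a connected component of `G - S`. -/
def IsCompOutside (G : SimpleGraph V) (S C : Set V) : Prop :=
  C.Nonempty ∧ Disjoint C S ∧ (G.induce C).Connected ∧
    ∀ u ∈ C, ∀ v, G.Adj u v → v ∉ S → v ∈ C

/-- A strict comb of cliques. -/
def HasStrictCombOfCliques (G : SimpleGraph V) : Prop :=
  ∃ v : ℕ → V, Function.Injective v ∧ (∀ i j, i ≠ j → G.Adj (v i) (v j)) ∧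
    ∀ i : ℕ, 0 < i → ∃ w, (∀ j, j < i → G.Adj w (v j)) ∧ (∀ j, i ≤ j → ¬ G.Adj w (v j))

/-- Every walk from `A` to `B` meets `S`. -/
def Separates (G : SimpleGraph V) (A B S : Set V) : Prop :=
  ∀ a ∈ A, ∀ b ∈ B, ∀ p : G.Walk a b, ∃ x ∈ p.support, x ∈ S

/-- `S` is a minimal `A`–`B` separator. -/
def IsMinimalSeparator (G : SimpleGraph V) (A B S : Set V) : Prop :=
  Separates G A B S ∧ ∀ S' ⊆ S, Separates G A B S' → S' = S

/-- `S` is a minimal `a`–`b` separator (containing neither `a` nor `b`). -/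
def IsMinimalVxSeparator (G : SimpleGraph V) (a b : V) (S : Set V) : Prop :=
  a ∉ S ∧ b ∉ S ∧ Separates G {a} {b} S ∧ ∀ S' ⊆ S, Separates G {a} {b} S' → S' = S

/-- A tree-decomposition of `G` with decomposition tree `T` and bags `bag`. -/
def IsTreeDecomp {ι : Type*} (G : SimpleGraph V) (T : SimpleGraph ι) (bag : ι → Set V) : Prop :=
  T.IsTree ∧ (∀ v, ∃ t, v ∈ bag t) ∧
    (∀ u v, G.Adj u v → ∃ t, u ∈ bag t ∧ v ∈ bag t) ∧
    ∀ v, (T.induce {t | v ∈ bag t}).Connected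

/-- `H` is an induced minor of `G`. -/
def IsInducedMinor (H : SimpleGraph W) (G : SimpleGraph V) : Prop :=
  ∃ B : W → Set V, (∀ w, (B w).Nonempty) ∧ (∀ w, (G.induce (B w)).Connected) ∧
    (Pairwise fun u w => Disjoint (B u) (B w)) ∧
    ∀ u w, u ≠ w → ((∃ x ∈ B u, ∃ y ∈ B w, G.Adj x y) ↔ H.Adj u w)

/-- The graph `𝓗`: a countably infinite clique together with two non-adjacent
dominating vertices. -/
def HGraph : SimpleGraph (ℕ ⊕ Bool) where
  Adj x y := match x, y with
    | .inl i, .inl j => i ≠ j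
    | .inl _, .inr _ => True
    | .inr _, .inl _ => True
    | .inr _, .inr _ => False
  symm := by
    constructor
    rintro (i | a) (j | b) h <;> simp_all
    exact fun h' => h h'.symm
  loopless := by
    constructor
    rintro (i | a) h <;> simp_all

/-- `u` lies on the path from `r` to `v` in the tree `T`; this is the tree-order. -/
def TreeLE (T : SimpleGraph V) (r u v : V) : Prop :=
  ∀ p : T.Walk r v, p.IsPath → u ∈ p.support

/-- `T` is a normal spanning tree of `G` with root `r`. -/
def IsNormalSpanningTree (G T : SimpleGraph V) (r : V) : Prop :=
  T ≤ G ∧ T.IsTree ∧ ∀ u v, G.Adj u v → TreeLE T r u v ∨ TreeLE T r v u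

universe u

/-! Suppose no vertex of `C` sees all of `S = N(C) ⊆ K`. Starting from any `v₀ ∈ C`, pick
`sᵢ ∈ S` missed by `vᵢ` and a vertex `vᵢ₊₁ ∈ C` seeing `sᵢ` and every vertex of `S` that `vᵢ`
sees. Then `vᵢ` sees `sⱼ` exactly for `j < i`, so the `sᵢ` (a clique, as `S ⊆ K`) and the `vᵢ`
form a strict comb of cliques.

Such a `vᵢ₊₁` exists by chordality: take the last vertex before `s` on a shortest path from `v` to
`s` through `C`. A neighbour `t ∈ S` of `v` missing it would see exactly the two ends of a segment
of that path ending in `s`, closing a chordless cycle of length at least four. -/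

variable {G : SimpleGraph V}

namespace SimpleGraph

def IsInducedPath (G : SimpleGraph V) (u : ℕ → V) (k : ℕ) : Prop :=
  (∀ i ≤ k, ∀ j ≤ k, u i = u j → i = j) ∧
    ∀ i ≤ k, ∀ j ≤ k, (G.Adj (u i) (u j) ↔ j = i + 1 ∨ i = j + 1)

namespace IsInducedPath

variable {u : ℕ → V} {k : ℕ}

theorem shift (hu : G.IsInducedPath u k) {a : ℕ} (ha : a ≤ k) :
    G.IsInducedPath (fun j => u (a + j)) (k - a) := by
  refine ⟨fun i hi j hj h => ?_, fun i hi j hj => ?_⟩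
  · have := hu.1 (a + i) (by omega) (a + j) (by omega) h
    omega
  · rw [hu.2 _ (by omega) _ (by omega)]
    omega

theorem map {G' : SimpleGraph W} (hu : G.IsInducedPath u k) (f : G ↪g G') :
    G'.IsInducedPath (f ∘ u) k :=
  ⟨fun i hi j hj h => hu.1 i hi j hj (f.injective h),
    fun i hi j hj => f.map_adj_iff.trans (hu.2 i hi j hj)⟩

end IsInducedPath

theorem Walk.not_adj_getVert_of_length_eq_dist {a b : V} (p : G.Walk a b)
    (hp : p.length = G.dist a b) {i j : ℕ} (hij : i + 1 < j) (hj : j ≤ p.length) :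
    ¬ G.Adj (p.getVert i) (p.getVert j) := fun h => by
  have := G.dist_le ((p.take i).append (Walk.cons h (p.drop j)))
  simp only [Walk.length_append, Walk.length_cons, Walk.take_length, Walk.drop_length] at this
  omega

theorem Walk.isInducedPath_getVert_of_length_eq_dist {a b : V} (p : G.Walk a b)
    (hp : p.length = G.dist a b) : G.IsInducedPath p.getVert p.length := by
  refine ⟨fun i hi j hj h => (p.isPath_of_length_eq_dist hp).getVert_injOn hi hj h,
    fun i hi j hj => ⟨fun h => ?_, ?_⟩⟩
  · rcases lt_trichotomy i j with hlt | rfl | hlt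
    · by_contra hne
      exact p.not_adj_getVert_of_length_eq_dist hp (by omega) hj h
    · exact absurd rfl h.ne
    · by_contra hne
      exact p.not_adj_getVert_of_length_eq_dist hp (by omega) hi h.symm
  · rintro (rfl | rfl)
    · exact p.adj_getVert_succ (by omega)
    · exact (p.adj_getVert_succ (by omega)).symm

end SimpleGraph

theorem IsChordal.false_of_cycle (hG : IsChordal G) {n : ℕ} (hn : 4 ≤ n) (w : ℕ → V)
    (hinj : ∀ i < n, ∀ j < n, w i = w j → i = j)
    (hadj : ∀ i < n, ∀ j < n, (G.Adj (w i) (w j) ↔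
      j = i + 1 ∨ i = j + 1 ∨ (i = 0 ∧ j + 1 = n) ∨ (j = 0 ∧ i + 1 = n))) : False := by
  have : NeZero n := ⟨by omega⟩
  have : Fact (1 < n) := ⟨by omega⟩
  have hsucc (a b : ZMod n) : b = a + 1 ↔ b.val = a.val + 1 ∨ (a.val + 1 = n ∧ b.val = 0) := by
    rw [← (ZMod.val_injective n).eq_iff, ZMod.val_add, ZMod.val_one]
    have := b.val_lt
    rcases (show a.val + 1 ≤ n from a.val_lt).lt_or_eq with h | h
    · rw [Nat.mod_eq_of_lt h]
      omega
    · rw [h, Nat.mod_self]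
      omega
  refine hG n hn (fun z => w z.val)
    (fun a b h => ZMod.val_injective n (hinj _ a.val_lt _ b.val_lt h)) fun a b => ?_
  rw [hadj _ a.val_lt _ b.val_lt, hsucc a b, hsucc b a]
  have := a.val_lt
  have := b.val_lt
  omega

theorem IsChordal.false_of_adj_iff_ends (hG : IsChordal G) {u : ℕ → V} {k : ℕ}
    (hu : G.IsInducedPath u k) (hk : 2 ≤ k) {x : V} (hx : ∀ j ≤ k, u j ≠ x)
    (hxu : ∀ j ≤ k, G.Adj x (u j) ↔ j = 0 ∨ j = k) : False := by
  refine hG.false_of_cycle (n := k + 2) (by omega) (fun j => if j ≤ k then u j else x)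
    (fun i hi j hj h => ?_) fun i hi j hj => ?_
  · split_ifs at h with h1 h2 h2
    · exact hu.1 i h1 j h2 h
    · exact absurd h (hx i h1)
    · exact absurd h.symm (hx j h2)
    · omega
  · split_ifs with h1 h2 h2
    · rw [hu.2 i h1 j h2]
      omega
    · rw [G.adj_comm, hxu i h1]
      omega
    · rw [hxu j h2]
      omega
    · exact iff_of_false (G.loopless.irrefl x) (by omega)

theorem IsChordal.adj_of_adj_ends (hG : IsChordal G) {u : ℕ → V} {m : ℕ}
    (hu : G.IsInducedPath u m) {x : V} (hx : ∀ j ≤ m, u j ≠ x) (h0 : G.Adj x (u 0))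
    (hm : G.Adj x (u m)) : G.Adj x (u (m - 1)) := by
  classical
  set a := Nat.findGreatest (fun j => G.Adj x (u j)) (m - 1)
  have ha : G.Adj x (u a) := Nat.findGreatest_spec (P := fun j => G.Adj x (u j)) (Nat.zero_le _) h0
  have ham : a ≤ m - 1 := Nat.findGreatest_le (m - 1)
  have hmax (j : ℕ) (h1 : a < j) (h2 : j ≤ m - 1) : ¬ G.Adj x (u j) :=
    Nat.findGreatest_is_greatest h1 h2
  by_contra hne
  have hlt : a < m - 1 := lt_of_le_of_ne ham fun h => hne (h ▸ ha)
  refine hG.false_of_adj_iff_ends (hu.shift (a := a) (by omega)) (by omega)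
    (fun j hj => hx _ (by omega)) fun j hj => ⟨fun h => ?_, ?_⟩
  · by_contra hj'
    exact hmax (a + j) (by omega) (by omega) h
  · rintro (rfl | rfl)
    · exact ha
    · rwa [show a + (m - a) = m by omega]

theorem IsChordal.exists_adj_of_mem_nbhdSet (hG : IsChordal G) {C : Set V}
    (hC : (G.induce C).Preconnected) (hS : G.IsClique (nbhdSet G C)) {v s : V} (hv : v ∈ C)
    (hs : s ∈ nbhdSet G C) :
    ∃ v' ∈ C, G.Adj v' s ∧ ∀ t ∈ nbhdSet G C, G.Adj v t → G.Adj v' t := by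
  have hreach : (G.induce (insert s C)).Reachable ⟨v, .inr hv⟩ ⟨s, .inl rfl⟩ := by
    obtain ⟨-, w, hw, hws⟩ := hs
    exact ((hC ⟨v, hv⟩ ⟨w, hw⟩).map (induceHomOfLE G (Set.subset_insert s C)).toHom).trans
      (Adj.reachable (G := G.induce (insert s C)) (u := ⟨w, .inr hw⟩) hws)
  obtain ⟨p, hp⟩ := hreach.exists_walk_length_eq_dist
  set m := p.length
  set u : ℕ → V := fun j => (p.getVert j).1
  have hu : G.IsInducedPath u m :=
    (p.isInducedPath_getVert_of_length_eq_dist hp).map (Embedding.induce _)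
  have hu0 : u 0 = v := by simp [u]
  have hum : u m = s := by simp [u, m]
  have huC (j : ℕ) (hj : j < m) : u j ∈ C :=
    (p.getVert j).2.resolve_left fun h => by
      have := hu.1 j hj.le m le_rfl (h.trans hum.symm)
      omega
  have hm : 0 < m := Nat.pos_of_ne_zero fun h => hs.1 (by rw [← hum, h, hu0]; exact hv)
  have hlast : G.Adj (u (m - 1)) s := hum ▸ (hu.2 _ (by omega) m le_rfl).2 (by omega)
  refine ⟨u (m - 1), huC _ (by omega), hlast, fun t ht hvt => ?_⟩
  obtain rfl | hts := eq_or_ne t s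
  · exact hlast
  refine (hG.adj_of_adj_ends hu (fun j hj hjt => ?_) (hu0 ▸ hvt.symm) (hum ▸ hS ht hs hts)).symm
  rcases hj.lt_or_eq with hj | rfl
  · exact ht.1 (hjt ▸ huC j hj)
  · exact hts (hjt ▸ hum)

theorem hasStrictCombOfCliques_of_forall_exists {C S : Set V} (hS : G.IsClique S)
    (hC : C.Nonempty) (h : ∀ v ∈ C, ∃ s ∈ S, ¬ G.Adj v s ∧
      ∃ v' ∈ C, G.Adj v' s ∧ ∀ t ∈ S, G.Adj v t → G.Adj v' t) :
    HasStrictCombOfCliques G := by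
  have h' (v : C) : ∃ s ∈ S, ¬ G.Adj v s ∧
      ∃ v' : C, G.Adj v' s ∧ ∀ t ∈ S, G.Adj v t → G.Adj v' t := by
    obtain ⟨s, hs, hvs, v', hv', hv's, hmono⟩ := h v v.2
    exact ⟨s, hs, hvs, ⟨v', hv'⟩, hv's, hmono⟩
  choose sel hselS hsel next hnext hnextMono using h'
  let f (n : ℕ) : C := next^[n] ⟨hC.some, hC.some_mem⟩
  have hf (n : ℕ) : f (n + 1) = next (f n) := Function.iterate_succ_apply' ..
  have hmono {i j : ℕ} (hij : i ≤ j) : ∀ t ∈ S, G.Adj (f i) t → G.Adj (f j) t := by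
    induction j, hij using Nat.le_induction with
    | base => exact fun t _ h => h
    | succ j _ ih => exact fun t ht h => hf j ▸ hnextMono _ t ht (ih t ht h)
  have hadj {i j : ℕ} (hji : j < i) : G.Adj (f i) (sel (f j)) :=
    hmono hji _ (hselS _) (hf j ▸ hnext _)
  have hnadj {i j : ℕ} (hij : i ≤ j) : ¬ G.Adj (f i) (sel (f j)) :=
    fun h => hsel _ (hmono hij _ (hselS _) h)
  have hinj : Function.Injective fun i => sel (f i) := by
    intro i j (he : sel (f i) = sel (f j))
    by_contra hne
    rcases Nat.lt_or_gt_of_ne hne with hlt | hlt <;> exact hnadj le_rfl (he ▸ hadj hlt)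
  exact ⟨fun i => sel (f i), hinj, fun i j hij => hS (hselS _) (hselS _) (hinj.ne hij),
    fun i _ => ⟨f i, fun j => hadj, fun j => hnadj⟩⟩

theorem IsCompOutside.nbhdSet_subset {S C : Set V} (hC : IsCompOutside G S C) :
    nbhdSet G C ⊆ S := fun x ⟨hxC, u, huC, hux⟩ => by
  by_contra hxS
  exact hxC (hC.2.2.2 u huC x hux hxS)

theorem stmt1_general {V : Type u} (G : SimpleGraph V)
    (hchordal : IsChordal G) (hcomb : ¬ HasStrictCombOfCliques G)
    (K : Set V) (hK : G.IsClique K)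
    (C : Set V) (hC : IsCompOutside G K C) (S : Set V) (hS : S = nbhdSet G C) :
    ∃ v ∈ C, ∀ s ∈ S, G.Adj v s := by
  subst hS
  have hSclique : G.IsClique (nbhdSet G C) := hK.subset hC.nbhdSet_subset
  by_contra! hno
  refine hcomb (hasStrictCombOfCliques_of_forall_exists hSclique hC.1 fun v hv => ?_)
  obtain ⟨s, hs, hvs⟩ := hno v hv
  exact ⟨s, hs, hvs, hchordal.exists_adj_of_mem_nbhdSet hC.2.2.1.preconnected hSclique hv hs⟩

theorem stmt1 {V : Type u} (G : SimpleGraph V) (hconn : G.Connected)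
    (hchordal : IsChordal G) (hcomb : ¬ HasStrictCombOfCliques G)
    (K : Set V) (hK : G.IsClique K)
    (C : Set V) (hC : IsCompOutside G K C) (S : Set V) (hS : S = nbhdSet G C) :
    ∃ v ∈ C, ∀ s ∈ S, G.Adj v s :=
  stmt1_general G hchordal hcomb K hK C hC S hS
end

section
/- In a chordal graph G, if there exist a clique K, a component C of G − K with S = N(C), and an infinite strictly increasing chain of sets N_S(w_1) ⊊ N_S(w_2) ⊊ ⋯ with all w_i ∈ C, then G contains a strict comb of cliques. -/
open SimpleGraph

variable {V W : Type*}

universe u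

theorem Set.exists_mem_iff_lt_of_ssubset_succ {α : Type*} {A : ℕ → Set α}
    (hA : ∀ i, A i ⊂ A (i + 1)) : ∃ s : ℕ → α, ∀ i j, s j ∈ A i ↔ j < i := by
  have hmono : Monotone A := monotone_nat_of_le_succ fun i => (hA i).subset
  choose s hs_succ hs_not using fun i => Set.exists_of_ssubset (hA i)
  refine ⟨s, fun i j => ⟨fun hji => ?_, fun hji => hmono (Nat.succ_le_of_lt hji) (hs_succ j)⟩⟩
  by_contra! hij
  exact hs_not j (hmono hij hji)

theorem injective_of_mem_iff_lt {α : Type*} {A : ℕ → Set α} {s : ℕ → α}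
    (hs : ∀ i j, s j ∈ A i ↔ j < i) : Function.Injective s := by
  intro a b hab
  by_contra hne
  rcases Nat.lt_or_gt_of_ne hne with h | h
  · exact lt_irrefl b ((hs b b).1 (hab ▸ (hs b a).2 h))
  · exact lt_irrefl a ((hs a a).1 (hab.symm ▸ (hs a b).2 h))

theorem nbhdSet_subset_of_isCompOutside {G : SimpleGraph V} {K C : Set V}
    (hC : IsCompOutside G K C) : nbhdSet G C ⊆ K := by
  rintro v ⟨hvC, u, huC, huv⟩
  by_contra hvK
  exact hvC (hC.2.2.2 u huC v huv hvK)

/-- Spine: a vertex `s j` entering the chain at stage `j + 1`; tooth for `i`: the vertex `w i`. -/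
theorem hasStrictCombOfCliques_of_ssubset_chain {G : SimpleGraph V} {S : Set V}
    (hS : G.IsClique S) (w : ℕ → V)
    (hchain : ∀ i, {s ∈ S | G.Adj (w i) s} ⊂ {s ∈ S | G.Adj (w (i + 1)) s}) :
    HasStrictCombOfCliques G := by
  obtain ⟨s, hs⟩ := Set.exists_mem_iff_lt_of_ssubset_succ hchain
  have hsS : ∀ j, s j ∈ S := fun j => ((hs (j + 1) j).2 j.lt_succ_self).1
  have hadj : ∀ i j, G.Adj (w i) (s j) ↔ j < i := fun i j =>
    (and_iff_right (hsS j)).symm.trans (hs i j)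
  have hinj := injective_of_mem_iff_lt hs
  refine ⟨s, hinj, fun i j hij => hS (hsS i) (hsS j) (hinj.ne hij), fun i _ => ⟨w i, ?_, ?_⟩⟩
  · exact fun j hj => (hadj i j).2 hj
  · exact fun j hj h => (Nat.not_lt.2 hj) ((hadj i j).1 h)

theorem stmt2_general {V : Type u} (G : SimpleGraph V)
    (K : Set V) (hK : G.IsClique K)
    (C : Set V) (hC : IsCompOutside G K C) (S : Set V) (hS : S = nbhdSet G C)
    (w : ℕ → V)
    (hchain : ∀ i, {s ∈ S | G.Adj (w i) s} ⊂ {s ∈ S | G.Adj (w (i + 1)) s}) :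
    HasStrictCombOfCliques G := by
  have hSK : S ⊆ K := hS ▸ nbhdSet_subset_of_isCompOutside hC
  exact hasStrictCombOfCliques_of_ssubset_chain (hK.subset hSK) w hchain

theorem stmt2 {V : Type u} (G : SimpleGraph V) (hchordal : IsChordal G)
    (K : Set V) (hK : G.IsClique K)
    (C : Set V) (hC : IsCompOutside G K C) (S : Set V) (hS : S = nbhdSet G C)
    (w : ℕ → V) (hw : ∀ i, w i ∈ C)
    (hchain : ∀ i, {s ∈ S | G.Adj (w i) s} ⊂ {s ∈ S | G.Adj (w (i + 1)) s}) :
    HasStrictCombOfCliques G :=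
  stmt2_general G K hK C hC S hS w hchain
end

section
/- A chordal graph G contains no induced minor isomorphic to 𝓗 if and only if for every two disjoint connected nonempty vertex sets A, B with no edge between them, every minimal A–B separator disjoint from A ∪ B is finite. -/
open SimpleGraph

variable {V W : Type*}

universe u

/-!
Let `S` be a minimal `A`–`B` separator avoiding `A ∪ B`, and let `C`, `D` be the unions of the
components of `G - S` meeting `A` and `B`. By minimality every vertex of `S` has a neighbour in
`C` and one in `D`. In a chordal graph this makes `S` a clique: for non-adjacent `s, t ∈ S`,
shortest `s`–`t` paths through `C` and through `D` would close an induced cycle of length at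
least four. So an infinite such `S` gives an induced `𝓗`-minor with branch sets `C`, `D` and the
singletons of `S`.

Conversely, the two non-adjacent branch sets `A`, `B` of an induced `𝓗`-minor are separated by
`(A ∪ B)ᶜ`, hence (by Zorn's lemma) by a minimal separator `M` avoiding `A ∪ B`. Each of the
infinitely many disjoint clique branch sets carries an `A`–`B` path, so `M` meets all of them
and is infinite.
-/

open Function Walk

section Development

variable {G : SimpleGraph V}

namespace SimpleGraph.Walk

variable {u v w : V}

lemma le_succ_of_adj_getVert_of_length_eq_dist {p : G.Walk u v} (hp : p.length = G.dist u v)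
    {i j : ℕ} (hj : j ≤ p.length) (hadj : G.Adj (p.getVert i) (p.getVert j)) :
    j ≤ i + 1 := by
  have := G.dist_le ((p.take i).append (.cons hadj (p.drop j)))
  simp only [length_append, length_cons, take_length, drop_length] at this
  omega

lemma isChordless_of_length_eq_dist {p : G.Walk u v} (hp : p.length = G.dist u v) :
    p.IsChordless := by
  suffices h : ∀ i j, i ≤ j → j ≤ p.length → G.Adj (p.getVert i) (p.getVert j) →
      s(p.getVert i, p.getVert j) ∈ p.edges by
    rw [isChordless_iff_forall_mem_edges]
    intro x y hx hy hxy
    obtain ⟨i, rfl, hi⟩ := mem_support_iff_exists_getVert.mp hx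
    obtain ⟨j, rfl, hj⟩ := mem_support_iff_exists_getVert.mp hy
    rcases le_total i j with hij | hji
    · exact h i j hij hj hxy
    · exact Sym2.eq_swap ▸ h j i hji hi hxy.symm
  intro i j hij hj hadj
  obtain rfl : j = i + 1 := by
    have := le_succ_of_adj_getVert_of_length_eq_dist hp hj hadj
    have : i ≠ j := by rintro rfl; exact hadj.ne rfl
    omega
  exact (mk_mem_edges_iff_exists p).mpr ⟨i, by omega, rfl⟩

lemma IsChordless.map {V' : Type*} {G' : SimpleGraph V'} (f : G ↪g G') {p : G.Walk u v}
    (hp : p.IsChordless) : (p.map f.toHom).IsChordless := by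
  rw [isChordless_iff_forall_mem_edges] at hp ⊢
  intro x y hx hy hxy
  rw [support_map, List.mem_map] at hx hy
  obtain ⟨x, hx, rfl⟩ := hx
  obtain ⟨y, hy, rfl⟩ := hy
  rw [edges_map]
  exact List.mem_map_of_mem (hp hx hy (f.map_adj_iff.mp hxy))

lemma IsChordless.append {p : G.Walk u v} {q : G.Walk v w} (hp : p.IsChordless)
    (hq : q.IsChordless) (h : ∀ x ∈ p.support, ∀ y ∈ q.support, G.Adj x y →
      x ∈ q.support ∨ y ∈ p.support) :
    (p.append q).IsChordless := by
  rw [isChordless_iff_forall_mem_edges] at hp hq ⊢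
  intro x y hx hy hxy
  rw [mem_support_append_iff] at hx hy
  rw [edges_append, List.mem_append]
  rcases hx with hxp | hxq <;> rcases hy with hyp | hyq
  · exact .inl (hp hxp hyp hxy)
  · rcases h x hxp y hyq hxy with hxq | hyp
    · exact .inr (hq hxq hyq hxy)
    · exact .inl (hp hxp hyp hxy)
  · rcases h y hyp x hxq hxy.symm with hyq | hxp
    · exact .inr (hq hxq hyq hxy)
    · exact .inl (hp hxp hyp hxy)
  · exact .inr (hq hxq hyq hxy)

lemma mem_of_mem_support_map_induce {T : Set V} {a b : T} (q : (G.induce T).Walk a b) {z : V}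
    (hz : z ∈ (q.map (Embedding.induce T).toHom).support) : z ∈ T := by
  obtain ⟨y, -, rfl⟩ := List.mem_map.mp (support_map _ q ▸ hz)
  exact y.2

lemma exists_isPath_isChordless_of_support_subset {T : Set V} (w : G.Walk u v)
    (hw : ∀ x ∈ w.support, x ∈ T) :
    ∃ p : G.Walk u v, p.IsPath ∧ p.IsChordless ∧ ∀ x ∈ p.support, x ∈ T := by
  obtain ⟨q, hq, hlen⟩ := (w.induce T hw).reachable.exists_path_of_dist
  refine ⟨q.map (Embedding.induce T).toHom, hq.map Subtype.val_injective,
    (isChordless_of_length_eq_dist hlen).map _, fun _ => q.mem_of_mem_support_map_induce⟩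

lemma IsPath.ne_start_of_mem_tail_support {u v x : V} {p : G.Walk u v} (hp : p.IsPath)
    (hx : x ∈ p.support.tail) : x ≠ u := by
  rintro rfl
  exact (List.nodup_cons.mp (p.cons_tail_support ▸ hp.support_nodup)).1 hx

lemma two_le_length_of_not_adj {u v : V} (p : G.Walk u v) (hne : u ≠ v)
    (hadj : ¬ G.Adj u v) : 2 ≤ p.length := by
  by_contra! hlt
  interval_cases h : p.length
  · exact hne (eq_of_length_eq_zero h)
  · exact hadj (adj_of_length_eq_one h)

end SimpleGraph.Walk

theorem IsChordal.length_lt_four (hG : IsChordal G) {v : V} {c : G.Walk v v} (hc : c.IsCycle)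
    (hcl : c.IsChordless) : c.length < 4 := by
  by_contra! hlen
  set n := c.length
  have : NeZero n := ⟨by omega⟩
  let f : ZMod n → V := fun i => c.getVert i.val
  have hf : ∀ m ≤ n, c.getVert m = f m := by
    intro m hm
    rcases hm.lt_or_eq with hm | rfl
    · simp [f, ZMod.val_natCast, Nat.mod_eq_of_lt hm]
    · simp [f, n]
  have hinj : f.Injective := fun i j h => ZMod.val_injective n <|
    hc.getVert_injOn' (by simp; have := ZMod.val_lt i; omega)
      (by simp; have := ZMod.val_lt j; omega) h
  have hsucc : ∀ i : ZMod n, G.Adj (f i) (f (i + 1)) := fun i => by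
    have := c.adj_getVert_succ (ZMod.val_lt i)
    rwa [hf _ (ZMod.val_lt i), Nat.cast_succ, ZMod.natCast_zmod_val] at this
  refine hG n hlen f hinj fun i j => ⟨fun hij => ?_, ?_⟩
  · obtain ⟨k, hk, he⟩ := (mk_mem_edges_iff_exists c).mp
      (hcl.mem_edges (c.getVert_mem_support _) (c.getVert_mem_support _) hij)
    rw [hf k hk.le, hf (k + 1) hk, Sym2.eq_iff] at he
    rcases he with ⟨hki, hkj⟩ | ⟨hkj, hki⟩
    · exact .inl (by rw [← hinj hki, ← hinj hkj, Nat.cast_succ])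
    · exact .inr (by rw [← hinj hki, ← hinj hkj, Nat.cast_succ])
  · rintro (rfl | rfl)
    · exact hsucc i
    · exact (hsucc j).symm

lemma exists_walk_support_subset_of_connected {C : Set V} (hC : (G.induce C).Connected)
    {s t x y : V} (hx : x ∈ C) (hy : y ∈ C) (hsx : G.Adj s x) (hyt : G.Adj y t) :
    ∃ p : G.Walk s t, ∀ z ∈ p.support, z ∈ insert s (insert t C) := by
  obtain ⟨q⟩ := hC.preconnected ⟨x, hx⟩ ⟨y, hy⟩
  let r : G.Walk x y := q.map (Embedding.induce C).toHom
  refine ⟨.cons hsx (r.concat hyt), fun z hz => ?_⟩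
  rw [support_cons, support_concat, List.mem_cons, List.mem_append,
    List.mem_singleton] at hz
  rcases hz with rfl | hz | rfl
  · exact .inl rfl
  · exact .inr (.inr (q.mem_of_mem_support_map_induce hz))
  · exact .inr (.inl rfl)

theorem IsChordal.adj_of_adj_both_sides (hG : IsChordal G) {C D : Set V}
    (hC : (G.induce C).Connected) (hD : (G.induce D).Connected) (hCD : Disjoint C D)
    (hnadj : ∀ x ∈ C, ∀ y ∈ D, ¬ G.Adj x y) {s t : V} (hst : s ≠ t)
    (hsC : ∃ x ∈ C, G.Adj s x) (hsD : ∃ y ∈ D, G.Adj s y) (htC : ∃ x ∈ C, G.Adj t x)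
    (htD : ∃ y ∈ D, G.Adj t y) : G.Adj s t := by
  by_contra hadj
  obtain ⟨p, hp, hpc, hpC⟩ : ∃ p : G.Walk s t, p.IsPath ∧ p.IsChordless ∧
      ∀ z ∈ p.support, z ∈ insert s (insert t C) := by
    obtain ⟨x, hx, hsx⟩ := hsC
    obtain ⟨y, hy, hty⟩ := htC
    obtain ⟨w, hw⟩ := exists_walk_support_subset_of_connected hC hx hy hsx hty.symm
    exact w.exists_isPath_isChordless_of_support_subset hw
  obtain ⟨q, hq, hqc, hqD⟩ : ∃ q : G.Walk t s, q.IsPath ∧ q.IsChordless ∧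
      ∀ z ∈ q.support, z ∈ insert t (insert s D) := by
    obtain ⟨x, hx, htx⟩ := htD
    obtain ⟨y, hy, hsy⟩ := hsD
    obtain ⟨w, hw⟩ := exists_walk_support_subset_of_connected hD hx hy htx hsy.symm
    exact w.exists_isPath_isChordless_of_support_subset hw
  have hcyc : (p.append q).IsCycle := by
    refine hp.isCycle_append hq (fun z hzp hzq => ?_)
      (.inl (p.two_le_length_of_not_adj hst hadj))
    have hzs := hp.ne_start_of_mem_tail_support hzp
    have hzt := hq.ne_start_of_mem_tail_support hzq
    rcases hpC z (List.mem_of_mem_tail hzp) with hz | hz | hzC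
    · exact hzs hz
    · exact hzt hz
    rcases hqD z (List.mem_of_mem_tail hzq) with hz | hz | hzD
    · exact hzt hz
    · exact hzs hz
    · exact hCD.ne_of_mem hzC hzD rfl
  have hchordless : (p.append q).IsChordless := by
    refine hpc.append hqc fun x hx y hy hxy => ?_
    rcases hpC x hx with rfl | rfl | hxC
    · exact .inl q.end_mem_support
    · exact .inl q.start_mem_support
    rcases hqD y hy with rfl | rfl | hyD
    · exact .inr p.end_mem_support
    · exact .inr p.start_mem_support
    · exact absurd hxy (hnadj x hxC y hyD)
  have := hG.length_lt_four hcyc hchordless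
  rw [length_append] at this
  have := p.two_le_length_of_not_adj hst hadj
  have := q.two_le_length_of_not_adj hst.symm (fun h => hadj h.symm)
  omega

/-- The union of the components of `G - S` that meet `A`. -/
def reachAvoiding (G : SimpleGraph V) (S A : Set V) : Set V :=
  {v | ∃ a ∈ A, ∃ p : G.Walk a v, ∀ x ∈ p.support, x ∉ S}

variable {S A B : Set V}

lemma subset_reachAvoiding (h : Disjoint A S) : A ⊆ reachAvoiding G S A :=
  fun a ha => ⟨a, ha, .nil, by simpa using h.notMem_of_mem_left ha⟩

lemma disjoint_reachAvoiding : Disjoint (reachAvoiding G S A) S :=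
  Set.disjoint_left.mpr fun _ ⟨_, _, p, hp⟩ => hp _ p.end_mem_support

lemma mem_reachAvoiding_of_adj {v w : V} (hv : v ∈ reachAvoiding G S A) (hvw : G.Adj v w)
    (hw : w ∉ S) : w ∈ reachAvoiding G S A := by
  obtain ⟨a, ha, p, hp⟩ := hv
  refine ⟨a, ha, p.concat hvw, fun x hx => ?_⟩
  rw [support_concat, List.mem_append, List.mem_singleton] at hx
  exact hx.elim (hp x) (· ▸ hw)

lemma support_subset_reachAvoiding {a v : V} (ha : a ∈ A) (p : G.Walk a v)
    (hp : ∀ x ∈ p.support, x ∉ S) : {x | x ∈ p.support} ⊆ reachAvoiding G S A := by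
  classical
  exact fun x hx =>
    ⟨a, ha, p.takeUntil x hx, fun y hy => hp y (p.support_takeUntil_subset_support hx hy)⟩

lemma connected_induce_reachAvoiding (hA : (G.induce A).Connected) (hAS : Disjoint A S) :
    (G.induce (reachAvoiding G S A)).Connected := by
  obtain ⟨a₀, ha₀⟩ := Set.nonempty_coe_sort.mp hA.nonempty
  refine induce_connected_of_patches a₀ (subset_reachAvoiding hAS ha₀) fun {v} hv => ?_
  obtain ⟨a, ha, p, hp⟩ := hv
  have hconn := induce_union_connected hA.preconnected p.connected_induce_support.preconnected
    ⟨a, ha, p.start_mem_support⟩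
  exact ⟨_, Set.union_subset (subset_reachAvoiding hAS) (support_subset_reachAvoiding ha p hp),
    .inl ha₀, .inr p.end_mem_support, hconn.preconnected _ _⟩

lemma Separates.symm (h : Separates G A B S) : Separates G B A S :=
  fun b hb a ha p => by simpa using h a ha b hb p.reverse

lemma IsMinimalSeparator.symm (h : IsMinimalSeparator G A B S) : IsMinimalSeparator G B A S :=
  ⟨h.1.symm, fun S' hS' hsep => h.2 S' hS' hsep.symm⟩

lemma Separates.reachAvoiding (h : Separates G A B S) :
    Separates G (reachAvoiding G S A) (reachAvoiding G S B) S := by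
  rintro x ⟨a, ha, p, hp⟩ y ⟨b, hb, q, hq⟩ r
  by_contra! hr
  obtain ⟨z, hz, hzS⟩ := h a ha b hb (p.append (r.append q.reverse))
  simp only [mem_support_append_iff, support_reverse, List.mem_reverse] at hz
  rcases hz with hz | hz | hz
  exacts [hp z hz hzS, hr z hz hzS, hq z hz hzS]

lemma Separates.not_adj (h : Separates G A B S) (hAS : Disjoint A S) (hBS : Disjoint B S)
    {a b : V} (ha : a ∈ A) (hb : b ∈ B) : ¬ G.Adj a b := fun hab => by
  obtain ⟨z, hz, hzS⟩ := h a ha b hb hab.toWalk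
  rw [hab.support_toWalk, List.mem_pair] at hz
  rcases hz with rfl | rfl
  exacts [hAS.ne_of_mem ha hzS rfl, hBS.ne_of_mem hb hzS rfl]

lemma Separates.disjoint (h : Separates G A B S) (hAS : Disjoint A S) : Disjoint A B :=
  Set.disjoint_left.mpr fun a ha hb => by
    obtain ⟨z, hz, hzS⟩ := h a ha a hb .nil
    exact hAS.ne_of_mem ha hzS (by simpa using (List.mem_singleton.mp hz).symm)

lemma IsMinimalSeparator.exists_adj_reachAvoiding (h : IsMinimalSeparator G A B S)
    (hAS : Disjoint A S) {s : V} (hs : s ∈ S) : ∃ x ∈ reachAvoiding G S A, G.Adj s x := by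
  have hnsep : ¬ Separates G A B (S \ {s}) := fun hsep =>
    (h.2 _ Set.sdiff_subset hsep ▸ hs).2 rfl
  simp only [Separates, not_forall, not_exists, not_and] at hnsep
  obtain ⟨a, ha, b, hb, p, hp⟩ := hnsep
  have hbA : b ∉ reachAvoiding G S A := fun ⟨a', ha', q, hq⟩ => by
    obtain ⟨z, hz, hzS⟩ := h.1 a' ha' b hb q
    exact hq z hz hzS
  obtain ⟨d, hd, hd₁, hd₂⟩ := p.exists_boundary_dart _ (subset_reachAvoiding hAS ha) hbA
  have hdS : d.snd ∈ S := by_contra fun h' => hd₂ (mem_reachAvoiding_of_adj hd₁ d.adj h')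
  have hds : d.snd = s := by
    by_contra h'
    exact hp d.snd (p.dart_snd_mem_support_of_mem_darts hd) ⟨hdS, h'⟩
  exact ⟨d.fst, hd₁, hds ▸ d.adj.symm⟩

lemma separates_compl_union (hAB : Disjoint A B) (hnadj : ∀ a ∈ A, ∀ b ∈ B, ¬ G.Adj a b) :
    Separates G A B (A ∪ B)ᶜ := by
  intro a ha b hb p
  obtain ⟨d, hd, hd₁, hd₂⟩ := p.exists_boundary_dart A ha (hAB.notMem_of_mem_right hb)
  exact ⟨d.snd, p.dart_snd_mem_support_of_mem_darts hd,
    fun h => h.elim hd₂ fun hB => hnadj _ hd₁ _ hB d.adj⟩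

lemma separates_sInter {c : Set (Set V)} (hc : IsChain (· ⊆ ·) c) (hne : c.Nonempty)
    (h : ∀ S ∈ c, Separates G A B S) : Separates G A B (⋂₀ c) := by
  classical
  intro a ha b hb p
  by_contra! hp
  have hdir : DirectedOn (fun S T : Set V => Sᶜ ⊆ Tᶜ) c := fun S hS T hT =>
    (hc.total hS hT).elim (fun hST => ⟨S, hS, subset_rfl, Set.compl_subset_compl.mpr hST⟩)
      (fun hTS => ⟨T, hT, Set.compl_subset_compl.mpr hTS, subset_rfl⟩)
  obtain ⟨S, hS, hpS⟩ := hdir.exists_mem_subset_of_finset_subset_biUnion hne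
    (s := p.support.toFinset) fun x hx => by
      simpa [Set.mem_sInter] using hp x (List.mem_toFinset.mp hx)
  obtain ⟨z, hz, hzS⟩ := h S hS a ha b hb p
  exact hpS (List.mem_toFinset.mpr hz) hzS

lemma Separates.exists_isMinimalSeparator_subset {T : Set V} (h : Separates G A B T) :
    ∃ S ⊆ T, IsMinimalSeparator G A B S := by
  obtain ⟨S, hST, hS⟩ := zorn_superset_nonempty {S | S ⊆ T ∧ Separates G A B S}
    (fun c hcF hc ⟨S, hS⟩ => ⟨⋂₀ c, ⟨(Set.sInter_subset_of_mem hS).trans (hcF hS).1,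
      separates_sInter hc ⟨S, hS⟩ fun S hS => (hcF hS).2⟩,
      fun _ => Set.sInter_subset_of_mem⟩)
    T ⟨subset_rfl, h⟩
  exact ⟨S, hST, hS.prop.2, fun S' hS' hsep => (hS.eq_of_ge ⟨hS'.trans hST, hsep⟩ hS').symm⟩

lemma Set.Finite.exists_disjoint_of_pairwise_disjoint {ι α : Type*} [Infinite ι]
    {f : ι → Set α} (hf : Pairwise (Disjoint on f)) {s : Set α} (hs : s.Finite) :
    ∃ i, Disjoint (f i) s := by
  by_contra! h
  choose g hg using fun i => Set.not_disjoint_iff.mp (h i)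
  refine Set.infinite_of_injective_forall_mem (fun i j hij => ?_) (fun i => (hg i).2) hs
  by_contra hne
  exact Set.disjoint_left.mp (hf hne) (hg i).1 (hij ▸ (hg j).1)

theorem isInducedMinor_HGraph_of_infinite_clique {S C D : Set V} (hS : S.Infinite)
    (hclique : S.Pairwise G.Adj) (hC : (G.induce C).Connected) (hD : (G.induce D).Connected)
    (hCD : Disjoint C D) (hnadj : ∀ x ∈ C, ∀ y ∈ D, ¬ G.Adj x y) (hCS : Disjoint C S)
    (hDS : Disjoint D S) (hSC : ∀ s ∈ S, ∃ x ∈ C, G.Adj s x)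
    (hSD : ∀ s ∈ S, ∃ y ∈ D, G.Adj s y) : IsInducedMinor HGraph G := by
  let e := hS.natEmbedding
  let branch : ℕ ⊕ Bool → Set V
    | .inl i => {(e i : V)}
    | .inr false => C
    | .inr true => D
  have he : ∀ i j, (e i : V) = e j ↔ i = j := fun i j =>
    Subtype.coe_inj.trans e.injective.eq_iff
  refine ⟨branch, ?_, ?_, ?_, ?_⟩
  · rintro (i | _ | _)
    exacts [Set.singleton_nonempty _, Set.nonempty_coe_sort.mp hC.nonempty,
      Set.nonempty_coe_sort.mp hD.nonempty]
  · rintro (i | _ | _)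
    · simp only [branch, induce_singleton_eq_top]
      exact connected_top
    exacts [hC, hD]
  · have hC' : ∀ i, (e i : V) ∉ C := fun i => hCS.notMem_of_mem_right (e i).2
    have hD' : ∀ i, (e i : V) ∉ D := fun i => hDS.notMem_of_mem_right (e i).2
    rintro (i | _ | _) (j | _ | _) hij <;>
      simp_all [branch, Set.disjoint_singleton_left, Set.disjoint_singleton_right, hCD.symm]
  · have hSS : ∀ i j, G.Adj (e i) (e j) ↔ i ≠ j := fun i j =>
      ⟨fun h hij => h.ne (by rw [hij]),
        fun hij => hclique (e i).2 (e j).2 ((he i j).not.mpr hij)⟩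
    have hSC' : ∀ i, ∃ x ∈ C, G.Adj x (e i) := fun i =>
      let ⟨x, hx, h⟩ := hSC _ (e i).2; ⟨x, hx, h.symm⟩
    have hSD' : ∀ i, ∃ y ∈ D, G.Adj y (e i) := fun i =>
      let ⟨y, hy, h⟩ := hSD _ (e i).2; ⟨y, hy, h.symm⟩
    have hnadj' : ∀ y ∈ D, ∀ x ∈ C, ¬ G.Adj y x := fun y hy x hx h =>
      hnadj x hx y hy h.symm
    rintro (i | _ | _) (j | _ | _) hij <;> simp_all [branch, HGraph]

theorem infinite_of_separates_of_isInducedMinor {branch : ℕ ⊕ Bool → Set V}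
    (hconn : ∀ w, (G.induce (branch w)).Connected) (hdisj : Pairwise (Disjoint on branch))
    (hadj : ∀ u w, u ≠ w →
      ((∃ x ∈ branch u, ∃ y ∈ branch w, G.Adj x y) ↔ HGraph.Adj u w))
    {M : Set V} (hM : Separates G (branch (.inr false)) (branch (.inr true)) M)
    (hMAB : Disjoint M (branch (.inr false) ∪ branch (.inr true))) : M.Infinite := by
  intro hfin
  obtain ⟨i, hi⟩ := hfin.exists_disjoint_of_pairwise_disjoint
    (hdisj.comp_of_injective Sum.inl_injective)
  obtain ⟨a, ha, x, hx, hax⟩ := (hadj (.inr false) (.inl i) (by simp)).mpr trivial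
  obtain ⟨y, hy, b, hb, hyb⟩ := (hadj (.inl i) (.inr true) (by simp)).mpr trivial
  obtain ⟨p, hp⟩ := exists_walk_support_subset_of_connected (hconn (.inl i)) hx hy hax hyb
  obtain ⟨z, hz, hzM⟩ := hM a ha b hb p
  rcases hp z hz with rfl | rfl | hzi
  · exact hMAB.ne_of_mem hzM (.inl ha) rfl
  · exact hMAB.ne_of_mem hzM (.inr hb) rfl
  · exact hi.ne_of_mem hzi hzM rfl

theorem IsChordal.isInducedMinor_HGraph_of_isMinimalSeparator (hG : IsChordal G)
    {A B S : Set V} (hA : (G.induce A).Connected) (hB : (G.induce B).Connected)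
    (hS : IsMinimalSeparator G A B S) (hSAB : Disjoint S (A ∪ B)) (hinf : S.Infinite) :
    IsInducedMinor HGraph G := by
  have hAS : Disjoint A S := (Set.disjoint_union_left.mp hSAB.symm).1
  have hBS : Disjoint B S := (Set.disjoint_union_left.mp hSAB.symm).2
  set C := reachAvoiding G S A
  set D := reachAvoiding G S B
  have hsep : Separates G C D S := hS.1.reachAvoiding
  have hCS : Disjoint C S := disjoint_reachAvoiding
  have hDS : Disjoint D S := disjoint_reachAvoiding
  have hCD : Disjoint C D := hsep.disjoint hCS
  have hC : (G.induce C).Connected := connected_induce_reachAvoiding hA hAS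
  have hD : (G.induce D).Connected := connected_induce_reachAvoiding hB hBS
  have hnadj : ∀ x ∈ C, ∀ y ∈ D, ¬ G.Adj x y := fun _ hx _ hy => hsep.not_adj hCS hDS hx hy
  have hSC : ∀ s ∈ S, ∃ x ∈ C, G.Adj s x := fun _ => hS.exists_adj_reachAvoiding hAS
  have hSD : ∀ s ∈ S, ∃ y ∈ D, G.Adj s y := fun _ => hS.symm.exists_adj_reachAvoiding hBS
  have hclique : S.Pairwise G.Adj := fun s hs t ht hst =>
    hG.adj_of_adj_both_sides hC hD hCD hnadj hst (hSC s hs) (hSD s hs) (hSC t ht) (hSD t ht)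
  exact isInducedMinor_HGraph_of_infinite_clique hinf hclique hC hD hCD hnadj hCS hDS hSC hSD

end Development

theorem stmt9 {V : Type u} (G : SimpleGraph V) (hchordal : IsChordal G) :
    ¬ IsInducedMinor HGraph G ↔
      ∀ A B : Set V, A.Nonempty → B.Nonempty →
        (G.induce A).Connected → (G.induce B).Connected →
        Disjoint A B → (∀ a ∈ A, ∀ b ∈ B, ¬ G.Adj a b) →
        ∀ S : Set V, IsMinimalSeparator G A B S → Disjoint S (A ∪ B) → S.Finite := by
  refine ⟨fun hminor A B _ _ hA hB _ _ S hS hSAB => ?_, ?_⟩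
  · by_contra hinf
    exact hminor (hchordal.isInducedMinor_HGraph_of_isMinimalSeparator hA hB hS hSAB hinf)
  · rintro hfin ⟨branch, hne, hconn, hdisj, hadj⟩
    set A := branch (.inr false)
    set B := branch (.inr true)
    have hAB : Disjoint A B := hdisj (by simp)
    have hnadj : ∀ a ∈ A, ∀ b ∈ B, ¬ G.Adj a b := fun a ha b hb hab =>
      (hadj _ _ (by simp)).mp ⟨a, ha, b, hb, hab⟩
    obtain ⟨M, hMsub, hM⟩ := (separates_compl_union hAB hnadj).exists_isMinimalSeparator_subset
    have hMAB : Disjoint M (A ∪ B) := Set.subset_compl_iff_disjoint_right.mp hMsub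
    exact infinite_of_separates_of_isInducedMinor hconn hdisj hadj hM.1 hMAB
      (hfin A B (hne _) (hne _) (hconn _) (hconn _) hAB hnadj M hM hMAB)
end
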